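/- The holomorphic family c ↦ f_c^{k+m}(c) − f_c^k(c), where f_c(z) = e^z + c, is a nonconstant entire function of c for any integers k ≥ 0, m ≥ 1; hence the set of Misiurewicz parameters with preperiod k and period dividing m is discrete in ℂ. -/

import Mathlib

/-!
On the real half-line `c ≥ 0` every step of `f_c(x) = eˣ + c` raises `x` by at least `1 + c`,
because `eˣ ≥ x + 1`. Hence `f_c^{k+m}(c) - f_c^k(c)` is real and at least `1 + c` there, which is
more than the modulus of any candidate constant value once `c` exceeds it. An entire function that
agrees with another on a set with an accumulation point agrees with it everywhere, so the equation
`f_c^{k+m}(c) = f_c^k(c)` can only have isolated solutions.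
-/

open Filter Function

theorem Differentiable.eq_of_accPt_setOf_eq {E : Type*} [NormedAddCommGroup E] [NormedSpace ℂ E]
    [CompleteSpace E] {f g : ℂ → E} (hf : Differentiable ℂ f) (hg : Differentiable ℂ g) {z₀ : ℂ}
    (h : AccPt z₀ (𝓟 {z | f z = g z})) : f = g :=
  funext fun z ↦
    (Complex.analyticOnNhd_univ_iff_differentiable.mpr hf).eqOn_of_preconnected_of_frequently_eq
      (Complex.analyticOnNhd_univ_iff_differentiable.mpr hg) isPreconnected_univ (Set.mem_univ z₀)
      (accPt_iff_frequently_nhdsNE.mp h) (Set.mem_univ z)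

theorem add_mul_le_iterate_of_add_le {f : ℝ → ℝ} {d : ℝ} (hf : ∀ x, x + d ≤ f x) (n : ℕ) (x : ℝ) :
    x + n * d ≤ f^[n] x := by
  induction n generalizing x with
  | zero => simp
  | succ n ih =>
    rw [iterate_succ_apply]
    push_cast
    linarith [ih (f x), hf x]

theorem iterate_exp_add_le_iterate_add {c : ℝ} (hc : 0 ≤ c) (k : ℕ) {m : ℕ} (hm : 1 ≤ m) :
    (fun x ↦ Real.exp x + c)^[k] c + (1 + c) ≤ (fun x ↦ Real.exp x + c)^[k + m] c := by
  have hstep (x : ℝ) : x + (1 + c) ≤ Real.exp x + c := by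
    linarith [Real.add_one_le_exp x]
  have hm' : 1 + c ≤ m * (1 + c) := le_mul_of_one_le_left (by linarith) (by exact_mod_cast hm)
  rw [add_comm k m, iterate_add_apply]
  linarith [add_mul_le_iterate_of_add_le hstep m ((fun x ↦ Real.exp x + c)^[k] c)]

theorem iterate_exp_add_ofReal (c x : ℝ) (n : ℕ) :
    (fun z ↦ Complex.exp z + c)^[n] (x : ℂ) = ((fun x ↦ Real.exp x + c)^[n] x : ℝ) := by
  have hsemiconj : Semiconj ((↑) : ℝ → ℂ) (fun x ↦ Real.exp x + c) (fun z ↦ Complex.exp z + c) :=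
    fun x ↦ by push_cast; rfl
  exact (hsemiconj.iterate_right n x).symm

theorem differentiable_iterate_exp_add_self (n : ℕ) :
    Differentiable ℂ fun c : ℂ ↦ (fun z ↦ Complex.exp z + c)^[n] c := by
  induction n with
  | zero => exact differentiable_id
  | succ n ih =>
    simp only [iterate_succ_apply']
    exact (Complex.differentiable_exp.comp ih).add differentiable_id

theorem not_exists_const_iterate_exp_add_sub (k : ℕ) {m : ℕ} (hm : 1 ≤ m) :
    ¬ ∃ a : ℂ, ∀ c : ℂ,
      (fun z ↦ Complex.exp z + c)^[k + m] c - (fun z ↦ Complex.exp z + c)^[k] c = a := by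
  rintro ⟨a, ha⟩
  have hgap := iterate_exp_add_le_iterate_add (norm_nonneg a) k hm
  have hval := ha (‖a‖ : ℂ)
  rw [iterate_exp_add_ofReal, iterate_exp_add_ofReal, ← Complex.ofReal_sub] at hval
  have hre := congrArg Complex.re hval
  rw [Complex.ofReal_re] at hre
  linarith [Complex.re_le_norm a]

theorem misiurewicz_parameters_discrete_general (k m : ℕ) (hm : 1 ≤ m) :
    (¬ ∃ a : ℂ, ∀ c : ℂ,
      (fun z => Complex.exp z + c)^[k + m] c - (fun z => Complex.exp z + c)^[k] c = a) ∧
    (∀ c₀ : ℂ, ¬ AccPt c₀ (𝓟 {c : ℂ |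
      (fun z => Complex.exp z + c)^[k + m] c = (fun z => Complex.exp z + c)^[k] c})) := by
  have hnonconst := not_exists_const_iterate_exp_add_sub k hm
  refine ⟨hnonconst, fun c₀ hacc ↦ hnonconst ⟨0, fun c ↦ ?_⟩⟩
  have heq := (differentiable_iterate_exp_add_self (k + m)).eq_of_accPt_setOf_eq
    (differentiable_iterate_exp_add_self k) hacc
  exact sub_eq_zero.mpr (congrFun heq c)

/-- The family c ↦ f_c^{k+m}(c) − f_c^k(c), with f_c(z) = e^z + c, is a nonconstant
entire function of c; hence the set of parameters c with f_c^{k+m}(c) = f_c^k(c)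
(in particular the Misiurewicz parameters of preperiod k and period dividing m)
has no accumulation point in ℂ. -/
theorem misiurewicz_parameters_discrete (k m : ℕ) (hk : 1 ≤ k) (hm : 1 ≤ m) :
    (¬ ∃ a : ℂ, ∀ c : ℂ,
      (fun z => Complex.exp z + c)^[k + m] c - (fun z => Complex.exp z + c)^[k] c = a) ∧
    (∀ c₀ : ℂ, ¬ AccPt c₀ (𝓟 {c : ℂ |
      (fun z => Complex.exp z + c)^[k + m] c = (fun z => Complex.exp z + c)^[k] c})) :=
  misiurewicz_parameters_discrete_general k m hm
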